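/- Let U be a closed set of Lyndon words over a well-ordered alphabet X (i.e., U contains all Lyndon factors of each of its elements). Suppose u, v ∈ U with u >_lex v and there is no w ∈ U with u >_lex w >_lex v. Then uv is a Lyndon word whose Shirshov factorization is (u, v), uv ∉ U, and every proper Lyndon factor of uv lies in U. Consequently, if U is finite, then the set Φ_L(U) of Lyndon words not in U all of whose proper Lyndon factors lie in U satisfies #(Φ_L(U) \ X) ≥ #(U) − 1. -/

import Mathlib

variable {X : Type*} [LinearOrder X] [WellFoundedLT X]

/-- The partial order `≺` on words: `u ≺ v` iff `u = r ++ x :: s`, `v = r ++ y :: t`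
with letters `x < y`. -/
def Prec (u v : List X) : Prop :=
  ∃ (r s t : List X) (x y : X), x < y ∧ u = r ++ x :: s ∧ v = r ++ y :: t

/-- The pseudo-lexicographic order: `u <_lex v` iff `v` is a proper prefix of `u` or `u ≺ v`. -/
def PLex (u v : List X) : Prop :=
  (v <+: u ∧ v ≠ u) ∨ Prec u v

/-- `u ≤_lex v`. -/
def PLexLe (u v : List X) : Prop := u = v ∨ PLex u v

/-- A Lyndon word (Kharchenko convention): a nonempty word strictly greater in the
pseudo-lexicographic order than each of its proper nonempty suffixes. -/
def IsLyndon (u : List X) : Prop :=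
  u ≠ [] ∧ ∀ v w : List X, u = v ++ w → v ≠ [] → w ≠ [] → PLex w u


/-- The Shirshov factorization of `u`: `u = uL ++ uR` where `uR` is the
pseudo-lexicographically largest proper (nonempty) suffix of `u`. -/
def IsShirshov (u uL uR : List X) : Prop :=
  u = uL ++ uR ∧ uL ≠ [] ∧ uR ≠ [] ∧
    ∀ w : List X, w <:+ u → w ≠ u → w ≠ [] → w = uR ∨ PLex w uR


/-- A set of Lyndon words is closed if it contains all Lyndon factors of its elements. -/
def LyndonClosed (U : Set (List X)) : Prop :=
  ∀ u ∈ U, ∀ v : List X, IsLyndon v → v <:+: u → v ∈ U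

/-- `Φ_L(U)`: Lyndon words not in `U` all of whose proper Lyndon factors lie in `U`. -/
def PhiL (U : Set (List X)) : Set (List X) :=
  {v | IsLyndon v ∧ v ∉ U ∧ ∀ t : List X, IsLyndon t → t <:+: v → t ≠ v → t ∈ U}

/-!
For Lyndon words `v <_lex u` the word `uv` is Lyndon. The largest proper suffix of `u` is a
Lyndon factor of `u`, hence lies in `U` below `u`; by adjacency no proper suffix of `u` exceeds
`v`, and this makes `v` the largest proper suffix of `uv`. A Lyndon factor of `uv` that crosses
the border is `sp` with `s` a suffix of `u` and `p` a prefix of `v`. If `s ≠ u`, the Lyndon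
inequality `p <_lex sp` gives `v <_lex sv`, against the Shirshov factorization. If `s = u` and
`p ≠ v`, the first letter where `p` and `up` differ yields a prefix `r x` of `v` such that `r y`
is a prefix of `ur` with `x < y`; then `r x` is a Lyndon factor of `v` strictly between `v`
and `u`. For the bound, `w ↦ w · pred w` (with `pred w` the predecessor of `w` in `U`) maps all
but the least element of `U` injectively into `Φ_L(U)`, by uniqueness of the Shirshov
factorization.
-/

variable {α : Type*} [LinearOrder α] {a b c u v w : List α} {x y : α}

theorem Prec.plex (h : Prec a b) : PLex a b := Or.inr h

theorem Prec.append (h : Prec a b) (c d : List α) : Prec (a ++ c) (b ++ d) := by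
  obtain ⟨r, s, t, x, y, hxy, rfl, rfl⟩ := h
  exact ⟨r, s ++ c, t ++ d, x, y, hxy, by simp, by simp⟩

theorem Prec.of_append_right (h : Prec a (b ++ c)) (hl : a.length ≤ b.length) : Prec a b := by
  obtain ⟨r, s, t, x, y, hxy, rfl, h⟩ := h
  obtain ⟨t', ht'⟩ : r ++ [y] <+: b :=
    List.prefix_of_prefix_length_le ⟨t, by simp [h]⟩ (List.prefix_append b c)
      (by simp at hl ⊢; omega)
  exact ⟨r, s, t', x, y, hxy, rfl, by simp [← ht']⟩

theorem PLex.prec_of_length_le (h : PLex a b) (hl : a.length ≤ b.length) : Prec a b :=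
  h.resolve_left fun ⟨hba, hne⟩ => hne (hba.eq_of_length_le hl)

theorem not_plex_nil : ¬ PLex [] a := by
  rintro (⟨h, hne⟩ | ⟨r, s, t, x, y, -, h, -⟩)
  · exact hne (List.eq_nil_of_prefix_nil h)
  · simp at h

theorem plex_nil (h : a ≠ []) : PLex a [] :=
  Or.inl ⟨List.nil_prefix, h.symm⟩

theorem plex_cons_cons : PLex (x :: a) (y :: b) ↔ x < y ∨ x = y ∧ PLex a b := by
  constructor
  · rintro (⟨h, hne⟩ | ⟨_ | ⟨z, r⟩, s, t, x', y', hxy, h₁, h₂⟩)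
    · rw [List.cons_prefix_cons] at h
      exact Or.inr ⟨h.1.symm, Or.inl ⟨h.2, fun hba => hne (by rw [h.1, hba])⟩⟩
    · simp only [List.nil_append, List.cons.injEq] at h₁ h₂
      exact Or.inl (h₁.1 ▸ h₂.1 ▸ hxy)
    · simp only [List.cons_append, List.cons.injEq] at h₁ h₂
      exact Or.inr ⟨h₁.1.trans h₂.1.symm, Or.inr ⟨r, s, t, x', y', hxy, h₁.2, h₂.2⟩⟩
  · rintro (h | ⟨rfl, ⟨h, hne⟩ | ⟨r, s, t, x', y', hxy, rfl, rfl⟩⟩)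
    · exact Or.inr ⟨[], a, b, x, y, h, rfl, rfl⟩
    · exact Or.inl ⟨List.cons_prefix_cons.mpr ⟨rfl, h⟩, fun hba => hne (List.cons.inj hba).2⟩
    · exact Or.inr ⟨x :: r, s, t, x', y', hxy, rfl, rfl⟩

theorem plex_irrefl (a : List α) : ¬ PLex a a := by
  induction a with
  | nil => exact not_plex_nil
  | cons x a ih => simpa [plex_cons_cons] using ih

theorem PLex.trans (hab : PLex a b) (hbc : PLex b c) : PLex a c := by
  induction a generalizing b c with
  | nil => exact absurd hab not_plex_nil
  | cons x a ih =>
    rcases b with _ | ⟨y, b⟩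
    · exact absurd hbc not_plex_nil
    rcases c with _ | ⟨z, c⟩
    · exact plex_nil (List.cons_ne_nil x a)
    rw [plex_cons_cons] at hab hbc ⊢
    rcases hab with hxy | ⟨rfl, hab⟩ <;> rcases hbc with hyz | ⟨rfl, hbc⟩
    exacts [Or.inl (hxy.trans hyz), Or.inl hxy, Or.inl hyz, Or.inr ⟨rfl, ih hab hbc⟩]

theorem PLex.asymm (hab : PLex a b) : ¬ PLex b a :=
  fun hba => plex_irrefl a (hab.trans hba)

theorem plex_trichotomy (a b : List α) : a = b ∨ PLex a b ∨ PLex b a := by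
  induction a generalizing b with
  | nil =>
    rcases b with _ | ⟨y, b⟩
    exacts [Or.inl rfl, Or.inr (Or.inr (plex_nil (List.cons_ne_nil y b)))]
  | cons x a ih =>
    rcases b with _ | ⟨y, b⟩
    · exact Or.inr (Or.inl (plex_nil (List.cons_ne_nil x a)))
    simp only [plex_cons_cons, List.cons.injEq]
    rcases lt_trichotomy x y with hxy | rfl | hxy
    · exact Or.inr (Or.inl (Or.inl hxy))
    · rcases ih b with h | h | h <;> simp [h]
    · exact Or.inr (Or.inr (Or.inl hxy))

theorem PLexLe.trans_plex (hab : PLexLe a b) (hbc : PLex b c) : PLex a c :=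
  hab.elim (· ▸ hbc) (·.trans hbc)

theorem PLex.trans_plexLe (hab : PLex a b) (hbc : PLexLe b c) : PLex a c :=
  hbc.elim (· ▸ hab) hab.trans

theorem plexLe_of_not_plex (h : ¬ PLex b a) : PLexLe a b := by
  rcases plex_trichotomy a b with h' | h' | h'
  exacts [Or.inl h', Or.inr h', absurd h' h]

theorem plex_append_left (w : List α) (h : PLex a b) : PLex (w ++ a) (w ++ b) := by
  induction w with
  | nil => exact h
  | cons x w ih => exact plex_cons_cons.mpr (Or.inr ⟨rfl, ih⟩)

theorem plex_append_of_ne_nil (a : List α) (hc : c ≠ []) : PLex (a ++ c) a :=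
  Or.inl ⟨List.prefix_append a c, by simpa using hc.symm⟩

theorem PLex.append_right (h : PLex a b) (c : List α) : PLex (a ++ c) b := by
  rcases h with ⟨hba, hne⟩ | ⟨r, s, t, x, y, hxy, rfl, rfl⟩
  · rcases eq_or_ne c [] with rfl | hc
    · rw [List.append_nil]
      exact Or.inl ⟨hba, hne⟩
    · exact (plex_append_of_ne_nil a hc).trans (Or.inl ⟨hba, hne⟩)
  · exact Or.inr ⟨r, s ++ c, t, x, y, hxy, by simp, rfl⟩

theorem Set.Finite.exists_plex_max {S : Set (List α)} (hS : S.Finite) (hne : S.Nonempty) :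
    ∃ m ∈ S, ∀ a ∈ S, PLexLe a m := by
  induction S, hS using Set.Finite.induction_on with
  | empty => exact absurd hne Set.not_nonempty_empty
  | @insert b S _ _ ih =>
    rcases S.eq_empty_or_nonempty with rfl | hS
    · exact ⟨b, by simp, fun a ha => Or.inl (by simpa using ha)⟩
    obtain ⟨m, hm, hmax⟩ := ih hS
    by_cases hmb : PLex m b
    · exact ⟨b, .inl rfl, by
        rintro a (rfl | ha)
        exacts [Or.inl rfl, Or.inr ((hmax a ha).trans_plex hmb)]⟩
    · exact ⟨m, .inr hm, by
        rintro a (rfl | ha)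
        exacts [plexLe_of_not_plex hmb, hmax a ha]⟩

theorem Set.Finite.exists_plex_adjacent {U : Set (List α)} (hU : U.Finite)
    (hw : ∃ z ∈ U, PLex z w) : ∃ m ∈ U, PLex m w ∧ ¬ ∃ z ∈ U, PLex z w ∧ PLex m z := by
  obtain ⟨z, hzU, hzw⟩ := hw
  have hfin : {z | z ∈ U ∧ PLex z w}.Finite := hU.subset fun _ hz => hz.1
  obtain ⟨m, ⟨hmU, hmw⟩, hmax⟩ := hfin.exists_plex_max ⟨z, hzU, hzw⟩
  exact ⟨m, hmU, hmw, fun ⟨z, hzU, hzw, hmz⟩ => plex_irrefl z ((hmax z ⟨hzU, hzw⟩).trans_plex hmz)⟩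

theorem IsLyndon.plex_of_suffix (hu : IsLyndon u) {s : List α} (hs : s <:+ u) (hsu : s ≠ u)
    (hs₀ : s ≠ []) : PLex s u := by
  obtain ⟨a, rfl⟩ := hs
  exact hu.2 a s rfl (by rintro rfl; exact hsu rfl) hs₀

theorem IsLyndon.plex_append (hv : IsLyndon v) (hu : u ≠ []) (hvu : PLex v u) :
    PLex v (u ++ v) := by
  rcases hvu with ⟨⟨z, rfl⟩, hne⟩ | h
  · exact plex_append_left u (hv.2 u z rfl hu (by rintro rfl; simp at hne))
  · simpa using (h.append [] v).plex

theorem IsLyndon.append (hu : IsLyndon u) (hv : IsLyndon v) (hvu : PLex v u) :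
    IsLyndon (u ++ v) := by
  have hv_lt : PLex v (u ++ v) := hv.plex_append hu.1 hvu
  refine ⟨by simp [hu.1], fun a b hab ha hb => ?_⟩
  rcases List.append_eq_append_iff.1 hab.symm with ⟨s, rfl, rfl⟩ | ⟨s, rfl, rfl⟩
  · rcases eq_or_ne s [] with rfl | hs
    · simpa using hv_lt
    have hsu : Prec s (a ++ s) := (hu.2 a s rfl ha hs).prec_of_length_le (by simp)
    simpa using (hsu.append v v).plex
  · rcases eq_or_ne s [] with rfl | hs
    · simpa using hv_lt
    exact (hv.2 s b rfl hs hb).trans hv_lt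

theorem exists_isLyndon_suffix_plexLe {s : List α} (hs : s <:+ u) (hsu : s ≠ u) (hs₀ : s ≠ []) :
    ∃ m, m <:+ u ∧ m ≠ u ∧ IsLyndon m ∧ PLexLe s m := by
  have hfin : {t | t <:+ u ∧ t ≠ u ∧ t ≠ []}.Finite :=
    u.tails.finite_toSet.subset fun t ht => (List.mem_tails t u).2 ht.1
  obtain ⟨m, ⟨hm, hmu, hm₀⟩, hmax⟩ := hfin.exists_plex_max ⟨s, hs, hsu, hs₀⟩
  refine ⟨m, hm, hmu, ⟨hm₀, fun a b hab ha hb => ?_⟩, hmax s ⟨hs, hsu, hs₀⟩⟩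
  have hlen : b.length < m.length := by
    simpa [hab] using List.length_pos_iff.2 ha
  have hbu : b ≠ u := by
    rintro rfl
    have := hm.length_le
    omega
  refine (hmax b ⟨(List.suffix_append a b).trans (hab ▸ hm), hbu, hb⟩).resolve_left ?_
  rintro rfl
  omega

theorem IsShirshov.unique (h₁ : IsShirshov w a b) (h₂ : IsShirshov w c d) : a = c ∧ b = d := by
  obtain ⟨rfl, ha, hb, hmax₁⟩ := h₁
  obtain ⟨hw, hc, hd, hmax₂⟩ := h₂
  have hbd : b = d := by
    rcases hmax₂ b (List.suffix_append a b) (by simpa using ha) hb with hbd | hbd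
    · exact hbd
    rcases hmax₁ d ⟨c, hw.symm⟩ (by simpa [hw] using hc) hd with hdb | hdb
    exacts [hdb.symm, absurd hdb hbd.asymm]
  subst hbd
  exact ⟨List.append_cancel_right hw, rfl⟩

theorem isShirshov_append (hv : IsLyndon v) (hu : u ≠ [])
    (hmax : ∀ s, s <:+ u → s ≠ u → s ≠ [] → ¬ PLex v s) : IsShirshov (u ++ v) u v := by
  refine ⟨rfl, hu, hv.1, fun w ⟨a, ha⟩ hw hw₀ => ?_⟩
  rcases List.append_eq_append_iff.1 ha with ⟨s, rfl, rfl⟩ | ⟨s, rfl, rfl⟩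
  · rcases eq_or_ne s [] with rfl | hs
    · simp
    have hsu : s ≠ a ++ s := by simpa using fun h : a = [] => hw (by simp [h])
    rcases plex_trichotomy s v with rfl | hsv | hvs
    · exact Or.inr (plex_append_of_ne_nil s hv.1)
    · exact Or.inr (hsv.append_right v)
    · exact absurd hvs (hmax s (List.suffix_append a s) hsu hs)
  · rcases eq_or_ne s [] with rfl | hs
    · simp
    · exact Or.inr (hv.2 s w rfl hs hw₀)

/-- The suffix `s ++ v` of `u ++ v` would be `>_lex v`, contradicting maximality of `v`. -/
theorem IsShirshov.not_isLyndon_suffix_append_prefix (h : IsShirshov (u ++ v) u v)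
    {s p : List α} (hs : s <:+ u) (hsu : s ≠ u) (hs₀ : s ≠ []) (hp : p <+: v) (hp₀ : p ≠ []) :
    ¬ IsLyndon (s ++ p) := by
  intro ht
  obtain ⟨z, rfl⟩ := hp
  obtain ⟨a, rfl⟩ := hs
  have hvs : PLex (p ++ z) (s ++ (p ++ z)) := by
    simpa using (((ht.2 s p rfl hs₀ hp₀).prec_of_length_le (by simp)).append z z).plex
  have hsv : s ++ (p ++ z) ≠ a ++ s ++ (p ++ z) := by
    simpa using fun h : a = [] => hsu (by simp [h])
  rcases h.2.2.2 (s ++ (p ++ z)) ⟨a, by simp⟩ hsv (by simp [hs₀]) with heq | hlt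
  · simp [hs₀] at heq
  · exact hvs.asymm hlt

theorem IsLyndon.isLyndon_append_singleton (hu : IsLyndon u) (hw : w ++ [y] <+: u)
    (hxy : x < y) : IsLyndon (w ++ [x]) := by
  obtain ⟨u₂, rfl⟩ := hw
  refine ⟨by simp, fun a b hab ha hb => ?_⟩
  obtain ⟨b', rfl, rfl⟩ : ∃ b', w = a ++ b' ∧ b = b' ++ [x] := by
    rcases List.append_eq_append_iff.1 hab with ⟨s, rfl, hs⟩ | ⟨b', hw, hb'⟩
    · rcases List.append_eq_singleton_iff.1 hs.symm with ⟨rfl, rfl⟩ | ⟨-, rfl⟩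
      exacts [⟨[], by simp, rfl⟩, absurd rfl hb]
    · exact ⟨b', hw, hb'⟩
  have hsuffix : PLex (b' ++ [y] ++ u₂) (a ++ b' ++ [y] ++ u₂) :=
    hu.2 a (b' ++ [y] ++ u₂) (by simp) ha (by simp)
  have hlt : PLex (b' ++ [x]) (a ++ b' ++ ([y] ++ u₂)) := by
    simpa using (Prec.plex ⟨b', [], u₂, x, y, hxy, rfl, by simp⟩).trans hsuffix
  have hprec : Prec (b' ++ [x]) (a ++ b') :=
    (hlt.prec_of_length_le (by simp; omega)).of_append_right
      (by simpa using List.length_pos_iff.2 ha)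
  simpa using (hprec.append [] [x]).plex

/-- The hypothesis says that `r` has period `|u|`: `r = u ^ k ++ w` with `w ++ [y] <+: u`. -/
theorem IsLyndon.isLyndon_append_singleton_of_prefix_append_self (hu : IsLyndon u)
    (hxy : x < y) {r : List α} (hr : r ++ [y] <+: u ++ r) :
    IsLyndon (r ++ [x]) ∧ PLex (r ++ [x]) u := by
  rcases lt_or_ge r.length u.length with hlt | hle
  · obtain ⟨u₂, hu₂⟩ : r ++ [y] <+: u :=
      List.prefix_of_prefix_length_le hr (List.prefix_append u r) (by simpa using hlt)
    exact ⟨hu.isLyndon_append_singleton ⟨u₂, hu₂⟩ hxy,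
      Prec.plex ⟨r, [], u₂, x, y, hxy, rfl, by simp [← hu₂]⟩⟩
  · obtain ⟨r', rfl⟩ : u <+: r :=
      List.prefix_of_prefix_length_le (List.prefix_append u r)
        ((List.prefix_append r [y]).trans hr) hle
    have hr' : r' ++ [y] <+: u ++ r' := by simpa using hr
    have hlen : r'.length < (u ++ r').length := by simpa using List.length_pos_iff.2 hu.1
    obtain ⟨hl, hlt⟩ := hu.isLyndon_append_singleton_of_prefix_append_self hxy hr'
    simpa using And.intro (hu.append hl hlt) (plex_append_of_ne_nil u (by simp : r' ++ [x] ≠ []))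
termination_by r.length

theorem IsLyndon.exists_isLyndon_prefix_plex (hu : IsLyndon u) {p : List α}
    (ht : IsLyndon (u ++ p)) (hp : p ≠ []) : ∃ q, q <+: p ∧ IsLyndon q ∧ PLex q u := by
  obtain ⟨r, σ, τ, x, y, hxy, rfl, ht_eq⟩ :=
    (ht.2 u p rfl hu.1 hp).prec_of_length_le (by simp)
  have hr : r ++ [y] <+: u ++ r :=
    List.prefix_of_prefix_length_le (l₃ := u ++ (r ++ x :: σ)) ⟨τ, by simp [ht_eq]⟩
      ⟨x :: σ, by simp⟩
      (by simpa using List.length_pos_iff.2 hu.1)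
  exact ⟨r ++ [x], ⟨σ, by simp⟩, hu.isLyndon_append_singleton_of_prefix_append_self hxy hr⟩

section Adjacent

variable {U : Set (List α)}

theorem not_plex_suffix_of_adjacent (hclosed : LyndonClosed U) (hu : IsLyndon u) (huU : u ∈ U)
    (hgap : ¬ ∃ w ∈ U, PLex w u ∧ PLex v w) {s : List α} (hs : s <:+ u) (hsu : s ≠ u)
    (hs₀ : s ≠ []) : ¬ PLex v s := by
  intro hvs
  obtain ⟨m, hm, hmu, hml, hsm⟩ := exists_isLyndon_suffix_plexLe hs hsu hs₀
  exact hgap ⟨m, hclosed u huU m hml hm.isInfix, hu.plex_of_suffix hm hmu hml.1,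
    hvs.trans_plexLe hsm⟩

theorem append_mem_phiL_of_adjacent (hclosed : LyndonClosed U) (hu : IsLyndon u)
    (hv : IsLyndon v) (huU : u ∈ U) (hvU : v ∈ U) (hvu : PLex v u)
    (hgap : ¬ ∃ w ∈ U, PLex w u ∧ PLex v w) :
    IsLyndon (u ++ v) ∧ IsShirshov (u ++ v) u v ∧ u ++ v ∈ PhiL U := by
  have hlyndon : IsLyndon (u ++ v) := hu.append hv hvu
  have hshirshov : IsShirshov (u ++ v) u v :=
    isShirshov_append hv hu.1 fun _ => not_plex_suffix_of_adjacent hclosed hu huU hgap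
  have hnotU : u ++ v ∉ U := fun h =>
    hgap ⟨u ++ v, h, plex_append_of_ne_nil u hv.1, hv.plex_append hu.1 hvu⟩
  refine ⟨hlyndon, hshirshov, hlyndon, hnotU, fun t ht htuv htne => ?_⟩
  rcases List.infix_append_iff_ne_nil.1 htuv with htu | htv | ⟨s, p, hs₀, hp₀, rfl, hs, hp⟩
  · exact hclosed u huU t ht htu
  · exact hclosed v hvU t ht htv
  exfalso
  rcases eq_or_ne s u with rfl | hsu
  · obtain ⟨q, hqp, hq, hqs⟩ := hu.exists_isLyndon_prefix_plex ht hp₀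
    have hqv : q <+: v := hqp.trans hp
    have hvq : PLex v q := by
      refine Or.inl ⟨hqv, fun hqv' => htne ?_⟩
      subst hqv'
      rw [hp.eq_of_length (le_antisymm hp.length_le hqp.length_le)]
    exact hgap ⟨q, hclosed v hvU q hq hqv.isInfix, hqs, hvq⟩
  · exact hshirshov.not_isLyndon_suffix_append_prefix hs hsu hs₀ hp hp₀ ht

theorem encard_le_encard_phiL_add_one (hU : ∀ u ∈ U, IsLyndon u) (hclosed : LyndonClosed U)
    (hfin : U.Finite) : U.encard ≤ {w | w ∈ PhiL U ∧ w.length ≠ 1}.encard + 1 := by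
  set S := {w | w ∈ U ∧ ∃ z ∈ U, PLex z w}
  choose! pred hpredU hpred hgap using fun w (hw : w ∈ S) => hfin.exists_plex_adjacent hw.2
  have hS : ∀ w ∈ S, IsShirshov (w ++ pred w) w (pred w) ∧ w ++ pred w ∈ PhiL U := fun w hw =>
    (append_mem_phiL_of_adjacent hclosed (hU w hw.1) (hU _ (hpredU w hw)) hw.1 (hpredU w hw)
      (hpred w hw) (hgap w hw)).2
  have hmaps : Set.MapsTo (fun w => w ++ pred w) S {w | w ∈ PhiL U ∧ w.length ≠ 1} :=
    fun w hw => ⟨(hS w hw).2, by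
      have := List.length_pos_iff.2 (hU w hw.1).1
      have := List.length_pos_iff.2 (hU _ (hpredU w hw)).1
      simp only [List.length_append]
      omega⟩
  have hinj : Set.InjOn (fun w => w ++ pred w) S := fun w₁ hw₁ w₂ hw₂ h => by
    have h₁ := (hS w₁ hw₁).1
    rw [show w₁ ++ pred w₁ = w₂ ++ pred w₂ from h] at h₁
    exact (h₁.unique (hS w₂ hw₂).1).1
  have hmin : (U \ S).encard ≤ 1 := by
    refine Set.encard_le_one_iff.2 fun a b ha hb => ?_
    rcases plex_trichotomy a b with h | h | h
    exacts [h, absurd ⟨hb.1, a, ha.1, h⟩ hb.2, absurd ⟨ha.1, b, hb.1, h⟩ ha.2]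
  calc U.encard = (S ∪ U \ S).encard := by rw [Set.union_sdiff_cancel fun w hw => hw.1]
    _ ≤ S.encard + (U \ S).encard := Set.encard_union_le _ _
    _ ≤ _ := add_le_add (Set.encard_le_encard_of_injOn hmaps hinj) hmin

end Adjacent

/-- Let `U` be a closed set of Lyndon words and `u, v ∈ U` with
`u >_lex v` adjacent in `U` (no `w ∈ U` with `u >_lex w >_lex v`). Then `uv` is a
Lyndon word with Shirshov factorization `(u, v)` and `uv ∈ Φ_L(U)`; consequently,
if `U` is finite then `#(Φ_L(U) \ X) ≥ #(U) - 1`. -/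
theorem shirshov_append_mem_phiL (U : Set (List X)) (hU : ∀ u ∈ U, IsLyndon u)
    (hclosed : LyndonClosed U) (u v : List X) (hu : u ∈ U) (hv : v ∈ U)
    (hvu : PLex v u) (hgap : ¬ ∃ w ∈ U, PLex w u ∧ PLex v w) :
    (IsLyndon (u ++ v) ∧ IsShirshov (u ++ v) u v ∧ (u ++ v) ∈ PhiL U) ∧
    (U.Finite → U.encard ≤ {w | w ∈ PhiL U ∧ w.length ≠ 1}.encard + 1) :=
  ⟨append_mem_phiL_of_adjacent hclosed (hU u hu) (hU v hv) hu hv hvu hgap,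
    encard_le_encard_phiL_add_one hU hclosed⟩
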